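/- arXiv:1511.01655 — 2 statements merged into one kernel-verified Lean document; each statement's English description precedes it below -/
import Mathlib

section
/- Let θ ∈ (0, 1/2) and let Z : (0, ∞) → [0, ∞) be measurable with Z ∈ L²(0, ∞). Suppose there exist C > 0 and t₀ ≥ 0 such that ∫ₜ^∞ Z(s)² ds ≤ C·Z(t)^{1/(1-θ)} for almost every t ≥ t₀. Then Z ∈ L¹(t₀, ∞). -/
open MeasureTheory

theorem stmt7 (θ : ℝ) (hθ : θ ∈ Set.Ioo (0:ℝ) (1/2))
    (Z : ℝ → ℝ) (hZmeas : Measurable Z) (hZnonneg : ∀ t, 0 < t → 0 ≤ Z t)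
    (hL2 : IntegrableOn (fun s => Z s ^ 2) (Set.Ioi (0:ℝ)))
    (C t₀ : ℝ) (hC : 0 < C) (ht₀ : 0 ≤ t₀)
    (h : ∀ᵐ t ∂(volume : Measure ℝ), t₀ ≤ t →
      (∫ s in Set.Ioi t, Z s ^ 2) ≤ C * Z t ^ ((1:ℝ) / (1 - θ))) :
    IntegrableOn Z (Set.Ioi t₀) := by
  classical
  obtain ⟨hθ0, hθh⟩ := hθ
  have h1θ : (0:ℝ) < 1 - θ := by linarith
  set p : ℝ := 1 / (1 - θ) with hp
  have hp0 : 0 < p := by positivity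
  have hInt : ∀ t : ℝ, 0 ≤ t → IntegrableOn (fun s => Z s ^ 2) (Set.Ioi t) := fun t ht =>
    hL2.mono_set (fun x hx => lt_of_le_of_lt ht hx)
  set H : ℝ → ℝ := fun t => ∫ s in Set.Ioi (max t t₀), Z s ^ 2 with hHdef
  have hmax : ∀ t : ℝ, (0:ℝ) ≤ max t t₀ := fun t => le_trans ht₀ (le_max_right _ _)
  have hHanti : Antitone H := by
    intro a b hab
    apply setIntegral_mono_set (hInt _ (hmax a))
    · exact Filter.Eventually.of_forall fun x => sq_nonneg _
    · apply HasSubset.Subset.eventuallyLE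
      intro x hx
      exact lt_of_le_of_lt (max_le_max hab le_rfl) hx
  have hHmeas : Measurable H := hHanti.measurable
  have hHnonneg : ∀ t, 0 ≤ H t := fun t =>
    setIntegral_nonneg measurableSet_Ioi (fun x _ => sq_nonneg _)
  have hHeq : ∀ t, t₀ ≤ t → H t = ∫ s in Set.Ioi t, Z s ^ 2 := by
    intro t ht; simp only [hHdef, max_eq_left ht]
  set H₀ := H t₀ with hH₀def
  rcases eq_or_lt_of_le (hHnonneg t₀) with h0 | hH₀pos
  · -- trivial case: H t₀ = 0, hence Z = 0 a.e. on (t₀, ∞)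
    have hint0 : (∫ s in Set.Ioi t₀, Z s ^ 2) = 0 := by
      rw [← hHeq t₀ le_rfl, ← h0]
    have hsq : (fun s => Z s ^ 2) =ᵐ[volume.restrict (Set.Ioi t₀)] 0 :=
      (integral_eq_zero_iff_of_nonneg (fun x => sq_nonneg _) (hInt t₀ ht₀)).mp hint0
    have hz : Z =ᵐ[volume.restrict (Set.Ioi t₀)] 0 := by
      filter_upwards [hsq] with s hs
      exact (pow_eq_zero_iff two_ne_zero).mp hs
    exact (integrable_congr hz).mpr (integrable_zero _ _ _)
  -- main case
  have hH₀pos' : 0 < H₀ := hH₀pos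
  set q : ℕ → ℝ := fun n => H₀ * (2⁻¹ : ℝ) ^ n with hqdef
  have hqpos : ∀ n, 0 < q n := fun n => by
    have : (0:ℝ) < (2⁻¹:ℝ) ^ n := by positivity
    simp only [hqdef]; positivity
  have hqsucc : ∀ n, q (n + 1) = q n * 2⁻¹ := fun n => by
    simp only [hqdef]; ring
  set z : ℕ → ℝ := fun n => (q (n + 1) / C) ^ (1 - θ) with hzdef
  have hzpos : ∀ n, 0 < z n := fun n => Real.rpow_pos_of_pos (div_pos (hqpos _) hC) _
  set S : ℕ → Set ℝ := fun n => {t | t₀ < t ∧ H t ≤ q n} with hSdef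
  set A : ℕ → Set ℝ := fun n => {t | t₀ < t ∧ q (n + 1) < H t ∧ H t ≤ q n} with hAdef
  set B : Set ℝ := {t | t₀ < t ∧ H t ≤ 0} with hBdef
  have hAmeas : ∀ n, MeasurableSet (A n) := fun n =>
    measurableSet_Ioi.inter ((hHmeas measurableSet_Ioi).inter (hHmeas measurableSet_Iic))
  have hBmeas : MeasurableSet B := measurableSet_Ioi.inter (hHmeas measurableSet_Iic)
  set μ' : Measure ℝ := volume.withDensity (fun s => ENNReal.ofReal (Z s ^ 2)) with hμ'def
  have hμ'null : ∀ s : Set ℝ, volume s = 0 → μ' s = 0 := fun s hs =>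
    (withDensity_absolutelyContinuous _ _) hs
  have hμ'Ioi : ∀ t, t₀ ≤ t → μ' (Set.Ioi t) = ENNReal.ofReal (H t) := by
    intro t ht
    rw [hμ'def, withDensity_apply _ measurableSet_Ioi, hHeq t ht]
    exact (ofReal_integral_eq_lintegral_ofReal (hInt t (le_trans ht₀ ht))
      (Filter.Eventually.of_forall fun x => sq_nonneg _)).symm
  -- bound on upward-closed sets
  have hup_bound : ∀ (E : Set ℝ) (M : ℝ), 0 ≤ M → (∀ t ∈ E, t₀ < t) →
      (∀ ⦃t t'⦄, t ∈ E → t ≤ t' → t' ∈ E) → (∀ t ∈ E, H t ≤ M) →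
      μ' E ≤ ENNReal.ofReal M := by
    intro E M hM hE1 hEup hEH
    rcases E.eq_empty_or_nonempty with rfl | hEne
    · simp
    have hbdd : BddBelow E := ⟨t₀, fun x hx => (hE1 x hx).le⟩
    set a := sInf E with hadef
    have hmem : ∀ ε : ℝ, 0 < ε → a + ε ∈ E := by
      intro ε hε
      obtain ⟨x, hxE, hxa⟩ := Real.lt_sInf_add_pos hEne hε
      exact hEup hxE hxa.le
    have hsub : E ⊆ insert a (Set.Ioi a) := by
      intro x hx
      rcases eq_or_lt_of_le (csInf_le hbdd hx) with he | hlt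
      · exact Set.mem_insert_iff.mpr (Or.inl he.symm)
      · exact Set.mem_insert_iff.mpr (Or.inr hlt)
    calc μ' E ≤ μ' (insert a (Set.Ioi a)) := measure_mono hsub
      _ ≤ μ' {a} + μ' (Set.Ioi a) := by
          rw [Set.insert_eq]; exact measure_union_le _ _
      _ = μ' (Set.Ioi a) := by
          rw [hμ'null {a} (by simp), zero_add]
      _ ≤ μ' (⋃ k : ℕ, Set.Ioi (a + 1 / (k + 1))) := by
          apply measure_mono
          intro x hx
          obtain ⟨k, hk⟩ := exists_nat_one_div_lt (show (0:ℝ) < x - a from sub_pos.mpr hx)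
          exact Set.mem_iUnion.mpr ⟨k, by simp only [Set.mem_Ioi]; linarith⟩
      _ = ⨆ k : ℕ, μ' (Set.Ioi (a + 1 / (k + 1))) := by
          apply Directed.measure_iUnion
          apply Monotone.directed_le
          intro i j hij
          apply Set.Ioi_subset_Ioi
          have h1 : (1:ℝ) / (j + 1) ≤ 1 / (i + 1) := by
            apply one_div_le_one_div_of_le
            · positivity
            · have := (Nat.cast_le (α := ℝ)).mpr hij; linarith
          linarith
      _ ≤ ENNReal.ofReal M := by
          apply iSup_le
          intro k
          have hk0 : (0:ℝ) < 1 / (k + 1) := by positivity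
          have hkE : a + 1 / (k + 1) ∈ E := hmem _ hk0
          rw [hμ'Ioi _ (hE1 _ hkE).le]
          exact ENNReal.ofReal_le_ofReal (hEH _ hkE)
  have hSup : ∀ n, ∀ ⦃t t'⦄, t ∈ S n → t ≤ t' → t' ∈ S n := fun n t t' ht htt' =>
    ⟨lt_of_lt_of_le ht.1 htt', le_trans (hHanti htt') ht.2⟩
  have hSbound : ∀ n, μ' (S n) ≤ ENNReal.ofReal (q n) := fun n =>
    hup_bound (S n) (q n) (hqpos n).le (fun t ht => ht.1) (hSup n) (fun t ht => ht.2)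
  -- the part where H vanishes carries no mass of Z
  have hBzero : ∫⁻ t in B, ENNReal.ofReal (Z t) = 0 := by
    rcases B.eq_empty_or_nonempty with hBe | hBne
    · rw [hBe]; simp
    have hBup : ∀ ⦃t t'⦄, t ∈ B → t ≤ t' → t' ∈ B := fun t t' ht htt' =>
      ⟨lt_of_lt_of_le ht.1 htt', le_trans (hHanti htt') ht.2⟩
    have hbdd : BddBelow B := ⟨t₀, fun x hx => hx.1.le⟩
    set c := sInf B with hcdef
    have hmem : ∀ ε : ℝ, 0 < ε → c + ε ∈ B := by
      intro ε hε
      obtain ⟨x, hxE, hxa⟩ := Real.lt_sInf_add_pos hBne hε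
      exact hBup hxE hxa.le
    have hnullk : ∀ k : ℕ, volume ({t | Z t ≠ 0} ∩ Set.Ioi (c + 1 / (k + 1))) = 0 := by
      intro k
      have hk0 : (0:ℝ) < 1 / (k + 1) := by positivity
      have hckB : c + 1 / (k + 1) ∈ B := hmem _ hk0
      have ht₀c : t₀ ≤ c + 1 / (k + 1) := hckB.1.le
      have hH0 : (∫ s in Set.Ioi (c + 1 / (k + 1)), Z s ^ 2) = 0 := by
        rw [← hHeq _ ht₀c]
        exact le_antisymm hckB.2 (hHnonneg _)
      have hsq : (fun s => Z s ^ 2) =ᵐ[volume.restrict (Set.Ioi (c + 1 / (k + 1)))] 0 :=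
        (integral_eq_zero_iff_of_nonneg (fun x => sq_nonneg _)
          (hInt _ (le_trans ht₀ ht₀c))).mp hH0
      have hzz : ∀ᵐ s ∂(volume : Measure ℝ), s ∈ Set.Ioi (c + 1 / (k + 1)) → Z s = 0 := by
        rw [← ae_restrict_iff' measurableSet_Ioi]
        filter_upwards [hsq] with s hs
        exact (pow_eq_zero_iff two_ne_zero).mp hs
      rw [ae_iff] at hzz
      refine measure_mono_null ?_ hzz
      intro x hx
      simp only [Set.mem_setOf_eq]
      exact fun hcon => hx.1 (hcon hx.2)
    have hnull : volume ({t | Z t ≠ 0} ∩ Set.Ioi c) = 0 := by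
      refine measure_mono_null ?_ (measure_iUnion_null hnullk)
      intro x hx
      obtain ⟨k, hk⟩ := exists_nat_one_div_lt (show (0:ℝ) < x - c from sub_pos.mpr hx.2)
      exact Set.mem_iUnion.mpr ⟨k, hx.1, by simp only [Set.mem_Ioi]; linarith⟩
    have haeB : ∀ᵐ t ∂(volume.restrict B), ENNReal.ofReal (Z t) = 0 := by
      rw [ae_restrict_iff' hBmeas, ae_iff]
      refine measure_mono_null ?_ (measure_union_null (measure_singleton c) hnull)
      intro x hx
      rw [Set.mem_setOf_eq] at hx
      push_neg at hx
      obtain ⟨hxB, hxZ⟩ := hx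
      have hZx : Z x ≠ 0 := by
        intro hcon; apply hxZ; rw [hcon]; simp
      rcases eq_or_lt_of_le (csInf_le hbdd hxB) with he | hlt
      · exact Or.inl (by simp [he.symm, hcdef])
      · exact Or.inr ⟨hZx, hlt⟩
    calc ∫⁻ t in B, ENNReal.ofReal (Z t) = ∫⁻ _ in B, 0 := lintegral_congr_ae haeB
      _ = 0 := lintegral_zero
  -- pointwise a.e. bound on A n
  have hae : ∀ᵐ t ∂(volume : Measure ℝ), ∀ n : ℕ, t ∈ A n →
      ENNReal.ofReal (Z t) ≤ (ENNReal.ofReal (z n))⁻¹ * ENNReal.ofReal (Z t ^ 2) := by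
    filter_upwards [h] with t ht n htA
    have ht₀t : t₀ < t := htA.1
    have hZt0 : 0 ≤ Z t := hZnonneg t (lt_of_le_of_lt ht₀ ht₀t)
    have h1 : q (n + 1) < C * Z t ^ p := by
      calc q (n + 1) < H t := htA.2.1
        _ ≤ C * Z t ^ p := by rw [hHeq t ht₀t.le]; exact ht ht₀t.le
    have h2 : q (n + 1) / C < Z t ^ p := (div_lt_iff₀ hC).mpr (by linarith)
    have h3 : (q (n + 1) / C) ^ (1 - θ) < (Z t ^ p) ^ (1 - θ) :=
      Real.rpow_lt_rpow (div_pos (hqpos _) hC).le h2 h1θ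
    have h4 : (Z t ^ p) ^ (1 - θ) = Z t := by
      rw [← Real.rpow_mul hZt0, hp, one_div, inv_mul_cancel₀ (ne_of_gt h1θ), Real.rpow_one]
    have hzlt : z n < Z t := h4 ▸ h3
    have hle : Z t ≤ Z t ^ 2 / z n := by
      rw [le_div_iff₀ (hzpos n), pow_two]
      nlinarith [hzlt, hZt0, hzpos n]
    calc ENNReal.ofReal (Z t) ≤ ENNReal.ofReal (Z t ^ 2 / z n) := ENNReal.ofReal_le_ofReal hle
      _ = (ENNReal.ofReal (z n))⁻¹ * ENNReal.ofReal (Z t ^ 2) := by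
          rw [ENNReal.ofReal_div_of_pos (hzpos n), div_eq_mul_inv, mul_comm]
  -- integral bound on each A n
  have hAbound : ∀ n, (∫⁻ t in A n, ENNReal.ofReal (Z t)) ≤ ENNReal.ofReal (q n / z n) := by
    intro n
    have hres : ∀ᵐ t ∂(volume.restrict (A n)),
        ENNReal.ofReal (Z t) ≤ (ENNReal.ofReal (z n))⁻¹ * ENNReal.ofReal (Z t ^ 2) := by
      filter_upwards [ae_restrict_of_ae hae, ae_restrict_mem (hAmeas n)] with t h1t h2t
      exact h1t n h2t
    calc (∫⁻ t in A n, ENNReal.ofReal (Z t))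
        ≤ ∫⁻ t in A n, (ENNReal.ofReal (z n))⁻¹ * ENNReal.ofReal (Z t ^ 2) :=
          lintegral_mono_ae hres
      _ = (ENNReal.ofReal (z n))⁻¹ * ∫⁻ t in A n, ENNReal.ofReal (Z t ^ 2) :=
          lintegral_const_mul' _ _ (ENNReal.inv_ne_top.mpr (ENNReal.ofReal_pos.mpr (hzpos n)).ne')
      _ = (ENNReal.ofReal (z n))⁻¹ * μ' (A n) := by
          rw [hμ'def, withDensity_apply _ (hAmeas n)]
      _ ≤ (ENNReal.ofReal (z n))⁻¹ * ENNReal.ofReal (q n) := by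
          gcongr
          exact le_trans (measure_mono (show A n ⊆ S n from fun t ht => ⟨ht.1, ht.2.2⟩)) (hSbound n)
      _ = ENNReal.ofReal (q n / z n) := by
          rw [ENNReal.ofReal_div_of_pos (hzpos n), div_eq_mul_inv, mul_comm]
  -- the sets cover (t₀, ∞)
  have hcover : Set.Ioi t₀ ⊆ B ∪ ⋃ n : ℕ, A n := by
    intro t ht
    by_cases hHt : H t ≤ 0
    · exact Or.inl ⟨ht, hHt⟩
    push_neg at hHt
    have hHle : H t ≤ q 0 := by
      simp only [hqdef, pow_zero, mul_one, hH₀def]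
      exact hHanti (le_of_lt ht)
    have hex : ∃ n : ℕ, q n < H t := by
      obtain ⟨n, hn⟩ := exists_pow_lt_of_lt_one (div_pos hHt hH₀pos')
        (by norm_num : (2⁻¹:ℝ) < 1)
      refine ⟨n, ?_⟩
      have h5 := (lt_div_iff₀ hH₀pos').mp hn
      have h6 : q n = (2⁻¹:ℝ) ^ n * H₀ := by simp only [hqdef]; ring
      linarith
    have hn₀ : q (Nat.find hex) < H t := Nat.find_spec hex
    have hn₀0 : Nat.find hex ≠ 0 := by
      intro h0
      rw [h0] at hn₀
      linarith
    obtain ⟨m, hm⟩ : ∃ m : ℕ, Nat.find hex = m + 1 := ⟨Nat.find hex - 1, by omega⟩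
    have hmle : H t ≤ q m := not_lt.mp (Nat.find_min hex (by omega))
    rw [hm] at hn₀
    exact Or.inr (Set.mem_iUnion.mpr ⟨m, ht, hn₀, hmle⟩)
  -- summability of the geometric bound
  have hsum : (∑' n : ℕ, ENNReal.ofReal (q n / z n)) < ⊤ := by
    have h2C : (0:ℝ) < 2 * C := by positivity
    set r : ℝ := (2⁻¹ : ℝ) ^ θ with hrdef
    have hr0 : 0 ≤ r := (Real.rpow_pos_of_pos (by norm_num) θ).le
    have hr1 : r < 1 := Real.rpow_lt_one (by norm_num) (by norm_num) hθ0
    set K : ℝ := (2 * C) ^ (1 - θ) * H₀ ^ θ with hKdef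
    have hqz : ∀ n : ℕ, q n / z n = K * r ^ n := by
      intro n
      have hq2 : q (n + 1) / C = q n / (2 * C) := by rw [hqsucc]; ring
      have hz' : z n = q n ^ (1 - θ) / (2 * C) ^ (1 - θ) := by
        simp only [hzdef]
        rw [hq2, Real.div_rpow (hqpos n).le h2C.le]
      have hsplit : q n = q n ^ θ * q n ^ (1 - θ) := by
        rw [← Real.rpow_add (hqpos n)]
        norm_num
      have hqθ : q n ^ θ = H₀ ^ θ * r ^ n := by
        simp only [hqdef, hrdef]
        rw [Real.mul_rpow hH₀pos'.le (by positivity),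
          ← Real.rpow_natCast (2⁻¹ : ℝ) n, ← Real.rpow_mul (by norm_num : (0:ℝ) ≤ 2⁻¹),
          mul_comm (n:ℝ) θ, Real.rpow_mul (by norm_num : (0:ℝ) ≤ 2⁻¹), Real.rpow_natCast]
      have key : K * r ^ n * z n = q n := by
        rw [hz', hKdef, div_eq_mul_inv]
        have hc : (2 * C) ^ (1 - θ) * ((2 * C) ^ (1 - θ))⁻¹ = 1 :=
          mul_inv_cancel₀ (ne_of_gt (Real.rpow_pos_of_pos h2C _))
        calc (2 * C) ^ (1 - θ) * H₀ ^ θ * r ^ n * (q n ^ (1 - θ) * ((2 * C) ^ (1 - θ))⁻¹)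
            = ((2 * C) ^ (1 - θ) * ((2 * C) ^ (1 - θ))⁻¹) * (H₀ ^ θ * r ^ n * q n ^ (1 - θ)) := by
              ring
          _ = H₀ ^ θ * r ^ n * q n ^ (1 - θ) := by rw [hc, one_mul]
          _ = q n ^ θ * q n ^ (1 - θ) := by rw [hqθ]
          _ = q n := hsplit.symm
      rw [div_eq_iff (ne_of_gt (hzpos n))]
      exact key.symm
    have hsummable : Summable (fun n : ℕ => q n / z n) := by
      apply Summable.congr ((summable_geometric_of_lt_one hr0 hr1).mul_left K)
      intro n
      exact (hqz n).symm
    rw [show (fun n : ℕ => ENNReal.ofReal (q n / z n)) = fun n : ℕ => ENNReal.ofReal (q n / z n)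
      from rfl]
    rw [← ENNReal.ofReal_tsum_of_nonneg (fun n => (div_nonneg (hqpos n).le (hzpos n).le)) hsummable]
    exact ENNReal.ofReal_lt_top
  -- put everything together
  have hfin : (∫⁻ t in Set.Ioi t₀, ENNReal.ofReal (Z t)) < ⊤ := by
    calc (∫⁻ t in Set.Ioi t₀, ENNReal.ofReal (Z t))
        ≤ ∫⁻ t in B ∪ ⋃ n : ℕ, A n, ENNReal.ofReal (Z t) := lintegral_mono_set hcover
      _ ≤ (∫⁻ t in B, ENNReal.ofReal (Z t)) + ∫⁻ t in ⋃ n : ℕ, A n, ENNReal.ofReal (Z t) :=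
          lintegral_union_le _ _ _
      _ ≤ 0 + ∑' n : ℕ, ∫⁻ t in A n, ENNReal.ofReal (Z t) :=
          add_le_add (le_of_eq hBzero) (lintegral_iUnion_le _ _)
      _ ≤ 0 + ∑' n : ℕ, ENNReal.ofReal (q n / z n) :=
          add_le_add le_rfl (ENNReal.tsum_le_tsum hAbound)
      _ < ⊤ := by simpa using hsum
  refine ⟨hZmeas.aestronglyMeasurable, ?_⟩
  rw [hasFiniteIntegral_iff_ofReal ?_]
  · exact hfin
  · exact (ae_restrict_iff' measurableSet_Ioi).mpr
      (Filter.Eventually.of_forall fun t ht => hZnonneg t (lt_of_le_of_lt ht₀ ht))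
end

section
/- Let E : [0, ∞) → ℝ be C¹, nonincreasing, with E(t) → F_∞ as t → ∞, and suppose there exist θ ∈ (0, 1/2), c₀ > 0, A : [0,∞) → [0,∞) continuous, and t₀ ≥ 0 such that -E'(t) ≥ c₀·A(t) and (E(t) - F_∞)^{1-θ} ≤ C·A(t)^{1/2} for all t ≥ t₀. Then ∫_{t₀}^∞ A(t)^{1/2} dt < ∞, and moreover ∫_t^∞ A(s)^{1/2} ds ≤ C'·(E(t) - F_∞)^θ for t ≥ t₀. -/
open MeasureTheory Filter

theorem stmt17 (E E' A : ℝ → ℝ) (Finf θ c₀ C t₀ : ℝ)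
    (hθ : θ ∈ Set.Ioo (0:ℝ) (1/2)) (hc₀ : 0 < c₀) (hC : 0 < C) (ht₀ : 0 ≤ t₀)
    (hE : ∀ t, 0 ≤ t → HasDerivAt E (E' t) t)
    (hmono : AntitoneOn E (Set.Ici (0:ℝ)))
    (hlim : Tendsto E atTop (nhds Finf))
    (hA : Continuous A) (hAnonneg : ∀ t, 0 ≤ A t)
    (h1 : ∀ t, t₀ ≤ t → c₀ * A t ≤ -E' t)
    (h2 : ∀ t, t₀ ≤ t → (E t - Finf) ^ (1 - θ) ≤ C * Real.sqrt (A t)) :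
    IntegrableOn (fun t => Real.sqrt (A t)) (Set.Ici t₀) ∧
    ∃ C' : ℝ, 0 < C' ∧ ∀ t, t₀ ≤ t →
      (∫ s in Set.Ioi t, Real.sqrt (A s)) ≤ C' * (E t - Finf) ^ θ := by
  obtain ⟨hθ0, hθ2⟩ := hθ
  set f : ℝ → ℝ := fun t => Real.sqrt (A t) with hfdef
  have hfc : Continuous f := Real.continuous_sqrt.comp hA
  have hfnn : ∀ t, 0 ≤ f t := fun t => Real.sqrt_nonneg _
  have hge : ∀ t, 0 ≤ t → Finf ≤ E t := by
    intro t ht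
    refine le_of_tendsto hlim ?_
    filter_upwards [eventually_ge_atTop t] with s hs
    exact hmono ht (ht.trans hs) hs
  have hKpos : 0 < C / (θ * c₀) := by positivity
  -- core lemma: on intervals where E > Finf
  have core : ∀ a b : ℝ, t₀ ≤ a → a ≤ b → (∀ s ∈ Set.Icc a b, Finf < E s) →
      (∫ s in a..b, f s) ≤ C / (θ * c₀) * (E a - Finf) ^ θ := by
    intro a b ha hab hpos
    have ha0 : (0:ℝ) ≤ a := ht₀.trans ha
    set K := θ * c₀ / C with hK
    have hKp : 0 < K := by positivity
    set φ : ℝ → ℝ := fun s => (E s - Finf) ^ θ + K * ∫ u in a..s, f u with hφ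
    have hder : ∀ s ∈ Set.Icc a b,
        HasDerivAt φ (θ * (E s - Finf) ^ (θ - 1) * E' s + K * f s) s := by
      intro s hs
      have hs0 : (0:ℝ) ≤ s := ha0.trans hs.1
      have hx : 0 < E s - Finf := sub_pos.2 (hpos s hs)
      have hd1 : HasDerivAt (fun u => (E u - Finf) ^ θ)
          (θ * (E s - Finf) ^ (θ - 1) * E' s) s := by
        have hc := (Real.hasDerivAt_rpow_const (x := E s - Finf) (p := θ)
          (Or.inl hx.ne')).comp s ((hE s hs0).sub_const Finf)
        exact hc
      have hd2 : HasDerivAt (fun u => ∫ x in a..u, f x) (f s) s :=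
        (hfc.integral_hasStrictDerivAt a s).hasDerivAt
      exact hd1.add (hd2.const_mul K)
    have hderneg : ∀ s ∈ Set.Icc a b,
        θ * (E s - Finf) ^ (θ - 1) * E' s + K * f s ≤ 0 := by
      intro s hs
      have hst : t₀ ≤ s := ha.trans hs.1
      have hx : 0 < E s - Finf := sub_pos.2 (hpos s hs)
      have hApos : 0 < A s := by
        rcases (hAnonneg s).lt_or_eq with h | h
        · exact h
        · exfalso
          have h2s := h2 s hst
          rw [← h, Real.sqrt_zero, mul_zero] at h2s
          exact absurd h2s (not_le.2 (Real.rpow_pos_of_pos hx _))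
      have hsA : 0 < Real.sqrt (A s) := Real.sqrt_pos.2 hApos
      have hxp : 0 < (E s - Finf) ^ (θ - 1) := Real.rpow_pos_of_pos hx _
      have hp1 : 0 < (E s - Finf) ^ (1 - θ) := Real.rpow_pos_of_pos hx _
      have hinv : (E s - Finf) ^ (θ - 1) = ((E s - Finf) ^ (1 - θ))⁻¹ := by
        rw [← Real.rpow_neg hx.le]; norm_num
      have h2s := h2 s hst
      have hkey : Real.sqrt (A s) / C ≤ A s * (E s - Finf) ^ (θ - 1) := by
        rw [hinv]
        have e1 : Real.sqrt (A s) / C = A s / (C * Real.sqrt (A s)) := by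
          rw [div_eq_div_iff hC.ne' (by positivity : (0:ℝ) < C * Real.sqrt (A s)).ne']
          nlinarith [Real.mul_self_sqrt (hAnonneg s)]
        rw [e1, div_eq_mul_inv]
        have : (C * Real.sqrt (A s))⁻¹ ≤ ((E s - Finf) ^ (1 - θ))⁻¹ :=
          inv_anti₀ hp1 h2s
        exact mul_le_mul_of_nonneg_left this hApos.le
      have hE's : E' s ≤ -(c₀ * A s) := by
        have := h1 s hst; linarith
      have step1 : θ * (E s - Finf) ^ (θ - 1) * E' s ≤
          -(θ * c₀) * (A s * (E s - Finf) ^ (θ - 1)) := by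
        have hθx : 0 ≤ θ * (E s - Finf) ^ (θ - 1) := by positivity
        nlinarith [mul_le_mul_of_nonneg_left hE's hθx]
      have step2 : -(θ * c₀) * (A s * (E s - Finf) ^ (θ - 1)) ≤
          -(θ * c₀) * (Real.sqrt (A s) / C) := by
        have hθc : 0 ≤ θ * c₀ := by positivity
        nlinarith [mul_le_mul_of_nonneg_left hkey hθc]
      have e2 : K * f s = (θ * c₀) * (Real.sqrt (A s) / C) := by
        rw [hK, hfdef]; ring
      rw [e2]; linarith
    have hanti : AntitoneOn φ (Set.Icc a b) := by
      apply antitoneOn_of_deriv_nonpos (convex_Icc a b)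
      · intro s hs
        exact (hder s hs).continuousAt.continuousWithinAt
      · intro s hs
        rw [interior_Icc] at hs
        exact (hder s (Set.Ioo_subset_Icc_self hs)).differentiableAt.differentiableWithinAt
      · intro s hs
        rw [interior_Icc] at hs
        rw [(hder s (Set.Ioo_subset_Icc_self hs)).deriv]
        exact hderneg s (Set.Ioo_subset_Icc_self hs)
    have hba : φ b ≤ φ a := hanti (Set.left_mem_Icc.2 hab) (Set.right_mem_Icc.2 hab) hab
    have hφa : φ a = (E a - Finf) ^ θ := by
      simp [hφ]
    have hbnn : 0 ≤ (E b - Finf) ^ θ :=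
      Real.rpow_nonneg (sub_nonneg.2 (hge b (ha0.trans hab))) _
    have hKint : K * (∫ u in a..b, f u) ≤ (E a - Finf) ^ θ := by
      have : (E b - Finf) ^ θ + K * (∫ u in a..b, f u) ≤ (E a - Finf) ^ θ := by
        rw [← hφa]; exact hba
      linarith
    calc (∫ s in a..b, f s) ≤ (E a - Finf) ^ θ / K := (le_div_iff₀' hKp).2 hKint
      _ = C / (θ * c₀) * (E a - Finf) ^ θ := by
        rw [hK]; field_simp
  -- general lemma
  have key : ∀ a b : ℝ, t₀ ≤ a → a ≤ b →
      (∫ s in a..b, f s) ≤ C / (θ * c₀) * (E a - Finf) ^ θ := by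
    intro a b ha hab
    have ha0 : (0:ℝ) ≤ a := ht₀.trans ha
    have hrhs : 0 ≤ C / (θ * c₀) * (E a - Finf) ^ θ := by
      have := Real.rpow_nonneg (sub_nonneg.2 (hge a ha0)) θ
      positivity
    by_cases hall : ∀ s ∈ Set.Icc a b, Finf < E s
    · exact core a b ha hab hall
    · push_neg at hall
      obtain ⟨s₀, hs₀, hs₀'⟩ := hall
      set S := Set.Icc a b ∩ E ⁻¹' {Finf} with hS
      have hSne : S.Nonempty := by
        refine ⟨s₀, hs₀, ?_⟩
        have := hge s₀ (ha0.trans hs₀.1)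
        exact le_antisymm hs₀' this
      have hSclosed : IsClosed S := by
        have hEcont : ContinuousOn E (Set.Icc a b) := fun s hs =>
          ((hE s (ha0.trans hs.1)).continuousAt).continuousWithinAt
        exact hEcont.preimage_isClosed_of_isClosed isClosed_Icc isClosed_singleton
      have hSbdd : BddBelow S := ⟨a, fun s hs => hs.1.1⟩
      set t₁ := sInf S with ht₁
      have ht₁S : t₁ ∈ S := hSclosed.csInf_mem hSne hSbdd
      have ht₁ab : t₁ ∈ Set.Icc a b := ht₁S.1
      have hEt₁ : E t₁ = Finf := ht₁S.2
      have hlt : ∀ s ∈ Set.Icc a b, s < t₁ → Finf < E s := by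
        intro s hs hst
        refine lt_of_le_of_ne (hge s (ha0.trans hs.1)) ?_
        intro h
        exact absurd (csInf_le hSbdd ⟨hs, h.symm⟩) (not_le.2 hst)
      have hEconst : ∀ s, t₁ ≤ s → E s = Finf := by
        intro s hs
        have h0 : (0:ℝ) ≤ t₁ := ha0.trans ht₁ab.1
        have := hmono h0 (h0.trans hs) hs
        exact le_antisymm (hEt₁ ▸ this) (hge s (h0.trans hs))
      have hfzero : ∀ s, t₁ < s → f s = 0 := by
        intro s hs
        have hev : E =ᶠ[nhds s] fun _ => Finf := by
          filter_upwards [Ioi_mem_nhds hs] with u hu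
          exact hEconst u (le_of_lt hu)
        have hds : HasDerivAt E 0 s :=
          (hasDerivAt_const s Finf).congr_of_eventuallyEq hev
        have hs0 : (0:ℝ) ≤ s := (ha0.trans ht₁ab.1).trans hs.le
        have hE'0 : E' s = 0 := ((hE s hs0).unique hds)
        have := h1 s ((ha.trans ht₁ab.1).trans hs.le)
        rw [hE'0] at this
        have hA0 : A s = 0 := le_antisymm (by nlinarith) (hAnonneg s)
        simp [hfdef, hA0]
      have hfzero' : ∀ s, t₁ ≤ s → f s = 0 := by
        intro s hs
        rcases hs.lt_or_eq with h | h
        · exact hfzero s h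
        · have hl1 : Tendsto f (nhdsWithin s (Set.Ioi s)) (nhds (f s)) :=
            (hfc.continuousAt.tendsto).mono_left nhdsWithin_le_nhds
          have hl2 : Tendsto f (nhdsWithin s (Set.Ioi s)) (nhds 0) := by
            refine Tendsto.congr' ?_ tendsto_const_nhds
            filter_upwards [self_mem_nhdsWithin] with u hu
            exact (hfzero u (by rw [h]; exact hu)).symm
          exact tendsto_nhds_unique hl1 hl2
      have hsplit : (∫ s in a..b, f s) = (∫ s in a..t₁, f s) + ∫ s in t₁..b, f s :=
        (intervalIntegral.integral_add_adjacent_intervals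
          (hfc.intervalIntegrable a t₁) (hfc.intervalIntegrable t₁ b)).symm
      have hright : (∫ s in t₁..b, f s) = 0 := by
        have : Set.EqOn f (fun _ => (0:ℝ)) (Set.uIcc t₁ b) := by
          intro u hu
          rw [Set.uIcc_of_le ht₁ab.2] at hu
          exact hfzero' u hu.1
        rw [intervalIntegral.integral_congr this]
        simp
      have hleft : (∫ s in a..t₁, f s) ≤ C / (θ * c₀) * (E a - Finf) ^ θ := by
        rcases ht₁ab.1.lt_or_eq with hat | hat
        · have hcont : Tendsto (fun c => ∫ s in a..c, f s) (nhdsWithin t₁ (Set.Iio t₁))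
              (nhds (∫ s in a..t₁, f s)) :=
            ((hfc.integral_hasStrictDerivAt a t₁).hasDerivAt.continuousAt.tendsto).mono_left
              nhdsWithin_le_nhds
          have := Ioo_mem_nhdsLT hat
          refine le_of_tendsto hcont ?_
          filter_upwards [Ioo_mem_nhdsLT hat] with c hc
          refine core a c ha hc.1.le ?_
          intro s hs
          exact hlt s ⟨hs.1, hs.2.trans (hc.2.le.trans ht₁ab.2)⟩ (lt_of_le_of_lt hs.2 hc.2)
        · rw [← hat]
          simpa using hrhs
      rw [hsplit, hright, add_zero]
      exact hleft
  -- integrability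
  have hint : IntegrableOn f (Set.Ioi t₀) := by
    refine integrableOn_Ioi_of_intervalIntegral_norm_bounded
      (C / (θ * c₀) * (E t₀ - Finf) ^ θ) t₀
      (fun i => hfc.integrableOn_Ioc) tendsto_id ?_
    filter_upwards [eventually_ge_atTop t₀] with b hb
    have : (∫ x in t₀..(id b), ‖f x‖) = ∫ x in t₀..b, f x := by
      simp only [id]
      refine intervalIntegral.integral_congr fun u _ => ?_
      rw [Real.norm_eq_abs, abs_of_nonneg (hfnn u)]
    rw [this]
    exact key t₀ b le_rfl hb
  constructor
  · rw [hfdef] at hint ⊢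
    exact (integrableOn_Ici_iff_integrableOn_Ioi (by simp)).2 hint
  · refine ⟨C / (θ * c₀), hKpos, fun t ht => ?_⟩
    have hIt : IntegrableOn f (Set.Ioi t) := hint.mono_set (Set.Ioi_subset_Ioi ht)
    have htend := intervalIntegral_tendsto_integral_Ioi t hIt tendsto_id
    refine le_of_tendsto htend ?_
    filter_upwards [eventually_ge_atTop t] with b hb
    exact key t b ht hb
end
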